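/- arXiv:1803.10957 — 3 statements merged into one kernel-verified Lean document; each statement's English description precedes it below -/
import Mathlib

section
/- On the space B of formal power series in variables p_1,…,p_n with coefficients in the polynomial ring k[x^1,…,x^n], the Moyal-type product a•b = a · exp(Σ_i (←∂/∂x^i)(→∂/∂p_i)) · b, i.e. (a•b)(x,p) = Σ_{m≥0} (1/m!) Σ_{i_1,…,i_m} (∂^m a/∂x^{i_1}…∂x^{i_m})(∂^m b/∂p_{i_1}…∂p_{i_m}), is associative. -/
/-!
STATEMENT 6.  On `B = k[x¹,…,xⁿ][[p₁,…,pₙ]]` (formal power series in the `p`'s with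
polynomial coefficients in the `x`'s), the Moyal-type product
`a•b = Σ_α (1/α!) (∂ₓ^α a)(∂ₚ^α b)` is associative.  `k` is a field of
characteristic zero.
-/

open MvPowerSeries

variable (k : Type*) [Field k] [CharZero k] (n : ℕ)

/-- `B = k[x][[p]]`: power series in the `p`-variables with coefficients
polynomials in the `x`-variables. -/
abbrev B := MvPowerSeries (Fin n) (MvPolynomial (Fin n) k)

variable {k n}

/-- Iterated partial derivative `∂ₓ^α` on polynomials in the `x`-variables:
`∂ₓ^α x^β = (∏ᵢ βᵢ(βᵢ-1)⋯(βᵢ-αᵢ+1)) x^{β-α}`. -/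
noncomputable def xD (α : Fin n →₀ ℕ) (q : MvPolynomial (Fin n) k) : MvPolynomial (Fin n) k :=
  ∑ β ∈ q.support, MvPolynomial.monomial (β - α)
    (((∏ i, Nat.descFactorial (β i) (α i) : ℕ) : k) * MvPolynomial.coeff β q)

/-- Iterated partial derivative `∂ₚ^α` on `B`, coefficientwise:
the coefficient of `p^m` in `∂ₚ^α b` is `(∏ᵢ (mᵢ+αᵢ)⋯(mᵢ+1))` times the coefficient
of `p^{m+α}` in `b`. -/
noncomputable def pD (α : Fin n →₀ ℕ) (b : B k n) : B k n :=
  fun m => ((∏ i, Nat.descFactorial (m i + α i) (α i) : ℕ) : k) •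
    MvPowerSeries.coeff (m + α) b

/-- The Moyal-type product `a•b = Σ_α (1/α!) (∂ₓ^α a)(∂ₚ^α b)`, written out
coefficientwise;  for each `p`-multidegree only finitely many `α` contribute since
the coefficients of `a` are polynomials. -/
noncomputable def moyal (a b : B k n) : B k n :=
  fun m => ∑ q ∈ Finset.HasAntidiagonal.antidiagonal m, ∑ᶠ α : Fin n →₀ ℕ,
    ((α.prod fun _ j => (j.factorial : k))⁻¹) •
      (xD α (MvPowerSeries.coeff q.1 a) * MvPowerSeries.coeff q.2 (pD α b))

namespace MoyalAux
set_option linter.unusedSectionVars false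
open MvPolynomial Finset

variable {k : Type*} [Field k] [CharZero k] {n : ℕ}

/-- `∂ₓ^α` coefficient on monomial `β`. -/
def dN (α β : Fin n →₀ ℕ) : ℕ := ∏ i, (β i).descFactorial (α i)

/-- `∂ₚ^α` coefficient at degree `t`. -/
def dd (t α : Fin n →₀ ℕ) : ℕ := ∏ i, (t i + α i).descFactorial (α i)

/-- multi-factorial in `k`. -/
noncomputable def fk (α : Fin n →₀ ℕ) : k := α.prod fun _ j => (j.factorial : k)

lemma xD_eq_sum (α : Fin n →₀ ℕ) (A : MvPolynomial (Fin n) k) :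
    xD α A = (AddMonoidAlgebra.coeff A).sum fun β c => MvPolynomial.monomial (β - α) ((dN α β : k) * c) := rfl

lemma xD_add (α : Fin n →₀ ℕ) (A A' : MvPolynomial (Fin n) k) :
    xD α (A + A') = xD α A + xD α A' := by
  rw [xD_eq_sum, xD_eq_sum, xD_eq_sum]
  exact Finsupp.sum_add_index (by intro β _; simp) (by intro β _ c c'; rw [mul_add, map_add])

lemma xD_monomial (α β : Fin n →₀ ℕ) (c : k) :
    xD α (MvPolynomial.monomial β c) = MvPolynomial.monomial (β - α) ((dN α β : k) * c) := by
  rw [xD_eq_sum]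
  exact Finsupp.sum_single_index (by simp)

lemma xD_zero (α : Fin n →₀ ℕ) : xD α (0 : MvPolynomial (Fin n) k) = 0 := by
  simp [xD_eq_sum]

lemma xD_zero_index (A : MvPolynomial (Fin n) k) : xD 0 A = A := by
  rw [xD_eq_sum]
  have h : ((AddMonoidAlgebra.coeff A).sum fun β c => MvPolynomial.monomial (β - 0) ((dN (0 : Fin n →₀ ℕ) β : k) * c))
      = (AddMonoidAlgebra.coeff A).sum fun β c => MvPolynomial.monomial β c := Finsupp.sum_congr (fun β _ => by simp [dN])
  rw [h, MvPolynomial.sum_def]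
  exact MvPolynomial.support_sum_monomial_coeff A

lemma xD_ne_zero (α : Fin n →₀ ℕ) (A : MvPolynomial (Fin n) k) (h : xD α A ≠ 0) :
    ∃ β ∈ A.support, α ≤ β := by
  by_contra hc
  push_neg at hc
  apply h
  rw [xD_eq_sum, Finsupp.sum]
  refine Finset.sum_eq_zero fun β hβ => ?_
  have : ∃ i, β i < α i := by
    by_contra hno
    push_neg at hno
    exact hc β hβ (Finsupp.le_def.mpr fun i => hno i)
  obtain ⟨i, hi⟩ := this
  have hdz : dN α β = 0 :=
    Finset.prod_eq_zero (Finset.mem_univ i) (Nat.descFactorial_eq_zero_iff_lt.mpr hi)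
  rw [hdz]
  simp

lemma dN_add_single (α β : Fin n →₀ ℕ) (j : Fin n) :
    dN (α + Finsupp.single j 1) β = dN α β * ((β - α) j) := by
  unfold dN
  rw [← Finset.mul_prod_erase Finset.univ _ (Finset.mem_univ j),
    ← Finset.mul_prod_erase Finset.univ (fun i => (β i).descFactorial (α i)) (Finset.mem_univ j)]
  have h1 : (α + Finsupp.single j 1 : Fin n →₀ ℕ) j = α j + 1 := by simp
  have h2 : ∀ i ∈ Finset.univ.erase j, (β i).descFactorial ((α + Finsupp.single j 1 : Fin n →₀ ℕ) i)
      = (β i).descFactorial (α i) := by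
    intro i hi
    have hji : (α + Finsupp.single j 1 : Fin n →₀ ℕ) i = α i := by
      rw [Finsupp.add_apply, Finsupp.single_apply, if_neg (Finset.mem_erase.mp hi).1.symm, add_zero]
    rw [hji]
  rw [Finset.prod_congr rfl h2, h1, Nat.descFactorial_succ, Finsupp.tsub_apply]
  ring

lemma pderiv_xD (j : Fin n) (α : Fin n →₀ ℕ) (A : MvPolynomial (Fin n) k) :
    pderiv j (xD α A) = xD (α + Finsupp.single j 1) A := by
  induction A using MvPolynomial.induction_on' with
  | monomial β c =>
    rw [xD_monomial, xD_monomial, pderiv_monomial, dN_add_single]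
    have he : β - α - Finsupp.single j 1 = β - (α + Finsupp.single j 1) := by
      rw [tsub_tsub]
    rw [he]
    congr 1
    push_cast
    ring
  | add p q hp hq => rw [xD_add, map_add, hp, hq, xD_add]

lemma fk_apply (α : Fin n →₀ ℕ) : (fk α : k) = ∏ i, ((α i).factorial : k) :=
  Finsupp.prod_fintype _ _ (fun i => by simp)

lemma fk_zero : (fk (0 : Fin n →₀ ℕ) : k) = 1 := by simp [fk_apply]

lemma fk_ne_zero (α : Fin n →₀ ℕ) : (fk α : k) ≠ 0 := by
  rw [fk_apply]
  exact Finset.prod_ne_zero_iff.mpr fun i _ => Nat.cast_ne_zero.mpr (Nat.factorial_ne_zero _)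

lemma fk_add_single (α : Fin n →₀ ℕ) (j : Fin n) :
    (fk (α + Finsupp.single j 1) : k) = fk α * (α j + 1) := by
  rw [fk_apply, fk_apply,
    ← Finset.mul_prod_erase Finset.univ _ (Finset.mem_univ j),
    ← Finset.mul_prod_erase Finset.univ (fun i => ((α i).factorial : k)) (Finset.mem_univ j)]
  have h1 : (α + Finsupp.single j 1 : Fin n →₀ ℕ) j = α j + 1 := by simp
  have h2 : ∀ i ∈ Finset.univ.erase j,
      (((α + Finsupp.single j 1 : Fin n →₀ ℕ) i).factorial : k) = ((α i).factorial : k) := by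
    intro i hi
    rw [Finsupp.add_apply, Finsupp.single_apply, if_neg (Finset.mem_erase.mp hi).1.symm, add_zero]
  rw [Finset.prod_congr rfl h2, h1, Nat.factorial_succ]
  push_cast
  ring

lemma dd_zero (t : Fin n →₀ ℕ) : dd t 0 = 1 := by simp [dd]

/-- The Pascal-type recursion for the `p`-derivative coefficients. -/
lemma dd_pascal {q2 α : Fin n →₀ ℕ} {j : Fin n} (h : Finsupp.single j 1 ≤ q2 + α) :
    dd q2 α = (if Finsupp.single j 1 ≤ q2 then dd (q2 - Finsupp.single j 1) α else 0)
      + α j * dd q2 (α - Finsupp.single j 1) := by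
  have hj : 1 ≤ q2 j + α j := by
    have := Finsupp.single_le_iff.mp h
    simpa using this
  set Pr := ∏ i ∈ Finset.univ.erase j, (q2 i + α i).descFactorial (α i) with hPr
  have hP : ∀ (γ δ : Fin n →₀ ℕ), (∀ i ∈ Finset.univ.erase j, γ i = q2 i ∧ δ i = α i) →
      ∏ i ∈ Finset.univ.erase j, (γ i + δ i).descFactorial (δ i) = Pr := by
    intro γ δ hgd
    exact Finset.prod_congr rfl fun i hi => by rw [(hgd i hi).1, (hgd i hi).2]
  have e0 : dd q2 α = ((q2 j + α j).descFactorial (α j)) * Pr := by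
    unfold dd
    rw [← Finset.mul_prod_erase Finset.univ _ (Finset.mem_univ j)]
  have e2 : dd q2 (α - Finsupp.single j 1)
      = ((q2 j + (α j - 1)).descFactorial (α j - 1)) * Pr := by
    unfold dd
    rw [← Finset.mul_prod_erase Finset.univ _ (Finset.mem_univ j)]
    have hα : (α - Finsupp.single j 1 : Fin n →₀ ℕ) j = α j - 1 := by simp
    rw [hα, hP q2 (α - Finsupp.single j 1)]
    intro i hi
    exact ⟨rfl, by rw [Finsupp.tsub_apply, Finsupp.single_apply,
      if_neg (Finset.mem_erase.mp hi).1.symm, tsub_zero]⟩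
  by_cases hq : Finsupp.single j 1 ≤ q2
  · have hq1 : 1 ≤ q2 j := by simpa using Finsupp.single_le_iff.mp hq
    have e1 : dd (q2 - Finsupp.single j 1) α
        = ((q2 j - 1 + α j).descFactorial (α j)) * Pr := by
      unfold dd
      rw [← Finset.mul_prod_erase Finset.univ _ (Finset.mem_univ j)]
      have hqj : (q2 - Finsupp.single j 1 : Fin n →₀ ℕ) j = q2 j - 1 := by simp
      rw [hqj, hP (q2 - Finsupp.single j 1) α]
      intro i hi
      exact ⟨by rw [Finsupp.tsub_apply, Finsupp.single_apply,
        if_neg (Finset.mem_erase.mp hi).1.symm, tsub_zero], rfl⟩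
    rw [e0, e1, e2, if_pos hq, ← mul_assoc, ← add_mul]
    congr 1
    obtain ⟨c, hc⟩ := Nat.exists_eq_add_of_le hq1
    rw [hc]
    cases hα : α j with
    | zero => simp
    | succ A =>
      have l1 : 1 + c + (A + 1) = (c + A + 1) + 1 := by omega
      have l2 : 1 + c - 1 + (A + 1) = (c + A) + 1 := by omega
      have l3 : 1 + c + (A + 1 - 1) = (c + 1) + A := by omega
      rw [l1, l2, l3, Nat.succ_descFactorial_succ, Nat.descFactorial_succ]
      have l4 : c + A + 1 - A = c + 1 := by omega
      have l5 : A + 1 - 1 = A := by omega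
      have l6 : c + 1 + A = c + A + 1 := by omega
      rw [l4, l5, l6]
      ring
  · have hq0 : q2 j = 0 := by
      by_contra hne
      exact hq (Finsupp.single_le_iff.mpr (Nat.one_le_iff_ne_zero.mpr hne))
    have hα1 : 1 ≤ α j := by omega
    rw [e0, e2, if_neg hq, zero_add, ← mul_assoc]
    congr 1
    rw [hq0]
    obtain ⟨A, hA⟩ := Nat.exists_eq_add_of_le hα1
    have l1 : α j = A + 1 := by omega
    rw [l1]
    simp only [zero_add, Nat.add_sub_cancel]
    exact Nat.succ_descFactorial_succ A A

/-- A finite set of multi-indices dominating all `x`-derivatives of coefficients of `a`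
up to `p`-degree `t`. -/
noncomputable def bnd (a : B k n) (t : Fin n →₀ ℕ) : Fin n →₀ ℕ :=
  ((Finset.Iic t).biUnion fun q1 => (a q1).support.biUnion Finset.Iic).sup id

lemma le_bnd {a : B k n} {t q1 α : Fin n →₀ ℕ} (hq : q1 ≤ t)
    (h : xD α (a q1) ≠ 0) : α ≤ bnd a t := by
  obtain ⟨β, hβ, hαβ⟩ := xD_ne_zero α (a q1) h
  have hmem : α ∈ (Finset.Iic t).biUnion fun q1 => (a q1).support.biUnion Finset.Iic := by
    refine Finset.mem_biUnion.mpr ⟨q1, Finset.mem_Iic.mpr hq, ?_⟩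
    exact Finset.mem_biUnion.mpr ⟨β, hβ, Finset.mem_Iic.mpr hαβ⟩
  exact Finset.le_sup (f := id) hmem

/-- Master lemma: the `finsum` in `moyal` as a concrete finite sum. -/
lemma moyal_coeff (a v : B k n) (t : Fin n →₀ ℕ) (S : Finset (Fin n →₀ ℕ))
    (hS : ∀ q1 α, q1 ≤ t → xD α (a q1) ≠ 0 → α ∈ S) :
    moyal a v t = ∑ q ∈ Finset.HasAntidiagonal.antidiagonal t, ∑ α ∈ S,
      (fk α : k)⁻¹ • (xD α (a q.1) * ((dd q.2 α : k) • v (q.2 + α))) := by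
  simp only [moyal]
  refine Finset.sum_congr rfl fun q hq => ?_
  have hq1 : q.1 ≤ t := Finset.HasAntidiagonal.antidiagonal.fst_le hq
  have hsupp : Function.support
      (fun α => (fk α : k)⁻¹ • (xD α (a q.1) * ((dd q.2 α : k) • v (q.2 + α)))) ⊆ S := by
    intro α hα
    by_contra hnot
    apply hα
    have hx : xD α (a q.1) = 0 := by
      by_contra hxne
      exact hnot (hS q.1 α hq1 hxne)
    simp [hx]
  exact finsum_eq_sum_of_support_subset _ hsupp

section Ops

/-- Multiplication by a polynomial in the `x`-variables. -/
noncomputable def Mxf (f : MvPolynomial (Fin n) k) (v : B k n) : B k n := fun t => f * v t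

/-- `∂/∂x_j` on `B`, coefficientwise. -/
noncomputable def xdd (j : Fin n) (v : B k n) : B k n := fun t => pderiv j (v t)

/-- Multiplication by `p_j`. -/
noncomputable def Mp (j : Fin n) (v : B k n) : B k n :=
  fun t => if Finsupp.single j 1 ≤ t then v (t - Finsupp.single j 1) else 0

/-- The operator `Z_j = ∂/∂x_j + p_j·`, commuting with left Moyal multiplications. -/
noncomputable def Zop (j : Fin n) (v : B k n) : B k n := fun t => xdd j v t + Mp j v t

/-- The monomial `p^s`. -/
noncomputable def pmon (s : Fin n →₀ ℕ) : B k n := fun t => if t = s then (1 : MvPolynomial (Fin n) k) else 0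

lemma add_apply' (u v : B k n) (t : Fin n →₀ ℕ) : (u + v) t = u t + v t := rfl

lemma moyal_add_right (a u v : B k n) : moyal a (u + v) = moyal a u + moyal a v := by
  funext t
  rw [add_apply',
    moyal_coeff a (u + v) t (Finset.Iic (bnd a t)) (fun q1 α hq h => Finset.mem_Iic.mpr (le_bnd hq h)),
    moyal_coeff a u t (Finset.Iic (bnd a t)) (fun q1 α hq h => Finset.mem_Iic.mpr (le_bnd hq h)),
    moyal_coeff a v t (Finset.Iic (bnd a t)) (fun q1 α hq h => Finset.mem_Iic.mpr (le_bnd hq h)),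
    ← Finset.sum_add_distrib]
  refine Finset.sum_congr rfl fun q _ => ?_
  rw [← Finset.sum_add_distrib]
  refine Finset.sum_congr rfl fun α _ => ?_
  rw [add_apply', smul_add, mul_add, smul_add]

lemma moyal_Mxf (a : B k n) (f : MvPolynomial (Fin n) k) (v : B k n) :
    moyal a (Mxf f v) = Mxf f (moyal a v) := by
  funext t
  have hSle : ∀ q1 α, q1 ≤ t → xD α (a q1) ≠ 0 → α ∈ Finset.Iic (bnd a t) :=
    fun q1 α hq h => Finset.mem_Iic.mpr (le_bnd hq h)
  rw [moyal_coeff a (Mxf f v) t _ hSle]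
  show _ = f * moyal a v t
  rw [moyal_coeff a v t _ hSle, Finset.mul_sum]
  refine Finset.sum_congr rfl fun q _ => ?_
  rw [Finset.mul_sum]
  refine Finset.sum_congr rfl fun α _ => ?_
  show (fk α : k)⁻¹ • (xD α (a q.1) * (dd q.2 α : k) • (f * v (q.2 + α)))
      = f * ((fk α : k)⁻¹ • (xD α (a q.1) * (dd q.2 α : k) • v (q.2 + α)))
  conv_rhs => rw [mul_smul_comm]
  simp only [mul_smul_comm]
  rw [mul_left_comm]

lemma moyal_one (a : B k n) : moyal a 1 = a := by
  funext t
  have hSle : ∀ q1 α, q1 ≤ t → xD α (a q1) ≠ 0 → α ∈ insert 0 (Finset.Iic (bnd a t)) :=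
    fun q1 α hq h => Finset.mem_insert.mpr (Or.inr (Finset.mem_Iic.mpr (le_bnd hq h)))
  rw [moyal_coeff a 1 t _ hSle]
  have hone : ∀ s : Fin n →₀ ℕ, (1 : B k n) s = if s = 0 then 1 else 0 := by
    intro s
    classical
    exact MvPowerSeries.coeff_one s  -- may need adjusting
  rw [Finset.sum_eq_single (t, 0)]
  · rw [Finset.sum_eq_single (0 : Fin n →₀ ℕ)]
    · rw [xD_zero_index, fk_zero, dd_zero, hone, add_zero]
      simp
    · intro α hα hαne
      rw [hone]
      have : ¬((0 : Fin n →₀ ℕ) + α = 0) := by simpa using hαne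
      rw [if_neg this]
      simp
    · intro h0
      exact absurd (Finset.mem_insert_self 0 _) h0
  · rintro ⟨q1, q2⟩ hq hqne
    apply Finset.sum_eq_zero
    intro α _
    rw [hone]
    have hq2 : q2 ≠ 0 := by
      intro h2
      apply hqne
      have h1 := Finset.HasAntidiagonal.mem_antidiagonal.mp hq
      rw [h2, add_zero] at h1
      have h1' : q1 = t := h1
      simp [Prod.mk.injEq, h1', h2]
    rw [if_neg (by simp [hq2])]
    simp
  · intro ht
    exact absurd (Finset.HasAntidiagonal.mem_antidiagonal.mpr (by simp)) ht

end Ops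

section Zcomm

variable (a v : B k n) (j : Fin n)

/-- basic Moyal summand -/
private noncomputable def tF (q : (Fin n →₀ ℕ) × (Fin n →₀ ℕ)) (α : Fin n →₀ ℕ) :
    MvPolynomial (Fin n) k :=
  (fk α : k)⁻¹ • (xD α (a q.1) * (dd q.2 α : k) • v (q.2 + α))

private noncomputable def tL1 (q : (Fin n →₀ ℕ) × (Fin n →₀ ℕ)) (α : Fin n →₀ ℕ) :
    MvPolynomial (Fin n) k :=
  (fk α : k)⁻¹ • (xD α (a q.1) * (dd q.2 α : k) • (MvPolynomial.pderiv j) (v (q.2 + α)))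

private noncomputable def tR1 (q : (Fin n →₀ ℕ) × (Fin n →₀ ℕ)) (α : Fin n →₀ ℕ) :
    MvPolynomial (Fin n) k :=
  (fk α : k)⁻¹ • (xD (α + Finsupp.single j 1) (a q.1) * (dd q.2 α : k) • v (q.2 + α))

private noncomputable def tT1 (q : (Fin n →₀ ℕ) × (Fin n →₀ ℕ)) (α : Fin n →₀ ℕ) :
    MvPolynomial (Fin n) k :=
  (fk α : k)⁻¹ • (xD α (a q.1) *
    (((α j : k)) * (dd q.2 (α - Finsupp.single j 1) : k)) • v (q.2 + α - Finsupp.single j 1))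

private noncomputable def tT3 (q : (Fin n →₀ ℕ) × (Fin n →₀ ℕ)) (α : Fin n →₀ ℕ) :
    MvPolynomial (Fin n) k :=
  if Finsupp.single j 1 ≤ q.2 then
    (fk α : k)⁻¹ • (xD α (a q.1) *
      (dd (q.2 - Finsupp.single j 1) α : k) • v (q.2 - Finsupp.single j 1 + α))
  else 0

private lemma split_term (q : (Fin n →₀ ℕ) × (Fin n →₀ ℕ)) (α : Fin n →₀ ℕ) :
    (fk α : k)⁻¹ • (xD α (a q.1) * (dd q.2 α : k) • (Zop j v (q.2 + α)))
      = tL1 a v j q α + (tT3 a v j q α + tT1 a v j q α) := by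
  have hz : Zop j v (q.2 + α) = MvPolynomial.pderiv j (v (q.2 + α))
      + (if Finsupp.single j 1 ≤ q.2 + α then v (q.2 + α - Finsupp.single j 1) else 0) := rfl
  rw [hz, smul_add, mul_add, smul_add]
  congr 1
  by_cases h : Finsupp.single j 1 ≤ q.2 + α
  · rw [if_pos h]
    have hdd := dd_pascal (j := j) h
    have hcast : ((dd q.2 α : ℕ) : k)
        = (if Finsupp.single j 1 ≤ q.2 then ((dd (q.2 - Finsupp.single j 1) α : ℕ) : k) else 0)
          + (α j : k) * (dd q.2 (α - Finsupp.single j 1) : k) := by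
      rw [hdd]
      push_cast [apply_ite (fun (m : ℕ) => (m : k))]
      ring
    rw [hcast, add_smul, mul_add, smul_add]
    congr 1
    · by_cases hq : Finsupp.single j 1 ≤ q.2
      · rw [if_pos hq]
        unfold tT3
        rw [if_pos hq]
        have harg : q.2 + α - Finsupp.single j 1 = q.2 - Finsupp.single j 1 + α :=
          (tsub_add_eq_add_tsub hq).symm
        rw [harg]
      · rw [if_neg hq]
        unfold tT3
        rw [if_neg hq]
        simp
  · rw [if_neg h]
    have hαj : α j = 0 := by
      have := Finsupp.single_le_iff.not.mp h
      simp only [Finsupp.add_apply] at this ⊢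
      omega
    have hq2 : ¬ Finsupp.single j 1 ≤ q.2 := fun hq => h (hq.trans le_self_add)
    unfold tT3 tT1
    rw [if_neg hq2, hαj]
    simp

end Zcomm

section Zcomm2

variable (a v : B k n) (j : Fin n)

private lemma sumT1 (t : Fin n →₀ ℕ) (q : (Fin n →₀ ℕ) × (Fin n →₀ ℕ)) (hq1 : q.1 ≤ t) :
    ∑ α ∈ Finset.Iic (bnd a t + Finsupp.single j 1), tT1 a v j q α
      = ∑ α ∈ Finset.Iic (bnd a t + Finsupp.single j 1), tR1 a v j q α := by
  have h1 : ∑ α ∈ Finset.Iic (bnd a t + Finsupp.single j 1), tR1 a v j q α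
      = ∑ α ∈ Finset.Iic (bnd a t), tR1 a v j q α := by
    refine (Finset.sum_subset (Finset.Iic_subset_Iic.mpr le_self_add) ?_).symm
    intro α _ hnot
    have hx : xD (α + Finsupp.single j 1) (a q.1) = 0 := by
      by_contra hxne
      refine hnot (Finset.mem_Iic.mpr ?_)
      exact le_self_add.trans (le_bnd hq1 hxne)
    unfold tR1
    rw [hx]
    simp
  have h2 : ∑ α ∈ Finset.Iic (bnd a t), tR1 a v j q α
      = ∑ α ∈ (Finset.Iic (bnd a t + Finsupp.single j 1)).filter
          (fun α => Finsupp.single j 1 ≤ α), tT1 a v j q α := by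
    refine Finset.sum_nbij' (fun α => α + Finsupp.single j 1)
      (fun α => α - Finsupp.single j 1) ?_ ?_ ?_ ?_ ?_
    · intro α hα
      refine Finset.mem_filter.mpr ⟨Finset.mem_Iic.mpr
        (add_le_add_left (Finset.mem_Iic.mp hα) _), le_add_self⟩
    · intro α hα
      obtain ⟨h1', h2'⟩ := Finset.mem_filter.mp hα
      exact Finset.mem_Iic.mpr (tsub_le_iff_right.mpr (Finset.mem_Iic.mp h1'))
    · intro α _
      exact add_tsub_cancel_right α _
    · intro α hα
      exact tsub_add_cancel_of_le (Finset.mem_filter.mp hα).2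
    · intro α _
      unfold tR1 tT1
      have e1 : (α + Finsupp.single j 1 : Fin n →₀ ℕ) - Finsupp.single j 1 = α :=
        add_tsub_cancel_right α _
      have e2 : q.2 + (α + Finsupp.single j 1) - Finsupp.single j 1 = q.2 + α := by
        rw [← add_assoc]
        exact add_tsub_cancel_right _ _
      have e3 : ((α + Finsupp.single j 1 : Fin n →₀ ℕ) j : k) = (α j : k) + 1 := by
        push_cast [Finsupp.add_apply, Finsupp.single_eq_same]
        ring
      rw [e1, e2, e3, fk_add_single]
      have hc : ((α j : k) + 1) ≠ 0 := by
        have := Nat.cast_add_one_ne_zero (R := k) (α j)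
        push_cast at this ⊢
        exact this
      rw [mul_smul ((α j : k) + 1) ((dd q.2 α : ℕ) : k) (v (q.2 + α)),
        mul_smul_comm ((α j : k) + 1) (xD (α + Finsupp.single j 1) (a q.1)),
        smul_smul ((fk α : k) * ((α j : k) + 1))⁻¹ ((α j : k) + 1)]
      congr 1
      rw [mul_inv, mul_assoc, inv_mul_cancel₀ hc, mul_one]
  have h3 : ∑ α ∈ (Finset.Iic (bnd a t + Finsupp.single j 1)).filter
        (fun α => Finsupp.single j 1 ≤ α), tT1 a v j q α
      = ∑ α ∈ Finset.Iic (bnd a t + Finsupp.single j 1), tT1 a v j q α := by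
    refine Finset.sum_subset (Finset.filter_subset _ _) ?_
    intro α hα hnot
    have hle : ¬ Finsupp.single j 1 ≤ α := fun hle => hnot (Finset.mem_filter.mpr ⟨hα, hle⟩)
    have hαj : α j = 0 := by
      by_contra hne
      exact hle (Finsupp.single_le_iff.mpr (Nat.one_le_iff_ne_zero.mpr hne))
    unfold tT1
    rw [hαj]
    simp
  rw [h1, h2, h3]

end Zcomm2

section Zcomm3

variable (a v : B k n) (j : Fin n)

private lemma sumT3 (t : Fin n →₀ ℕ) :
    ∑ q ∈ Finset.HasAntidiagonal.antidiagonal t, ∑ α ∈ Finset.Iic (bnd a t + Finsupp.single j 1), tT3 a v j q α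
      = if Finsupp.single j 1 ≤ t then moyal a v (t - Finsupp.single j 1) else 0 := by
  set S := Finset.Iic (bnd a t + Finsupp.single j 1) with hSdef
  by_cases ht : Finsupp.single j 1 ≤ t
  · rw [if_pos ht]
    have hS' : ∀ q1 α, q1 ≤ t - Finsupp.single j 1 → xD α (a q1) ≠ 0 → α ∈ S :=
      fun q1 α hq h => Finset.mem_Iic.mpr
        ((le_bnd (hq.trans tsub_le_self) h).trans le_self_add)
    rw [moyal_coeff a v (t - Finsupp.single j 1) S hS']
    have hifout : ∀ q : (Fin n →₀ ℕ) × (Fin n →₀ ℕ), ∑ α ∈ S, tT3 a v j q α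
        = if Finsupp.single j 1 ≤ q.2 then
            ∑ α ∈ S, (fk α : k)⁻¹ • (xD α (a q.1) *
              (dd (q.2 - Finsupp.single j 1) α : k) • v (q.2 - Finsupp.single j 1 + α))
          else 0 := by
      intro q
      by_cases hq : Finsupp.single j 1 ≤ q.2
      · rw [if_pos hq]
        refine Finset.sum_congr rfl fun α _ => ?_
        unfold tT3
        rw [if_pos hq]
      · rw [if_neg hq]
        refine Finset.sum_eq_zero fun α _ => ?_
        unfold tT3
        rw [if_neg hq]
    rw [Finset.sum_congr rfl fun q _ => hifout q, ← Finset.sum_filter]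
    refine Finset.sum_nbij' (fun q => (q.1, q.2 - Finsupp.single j 1))
      (fun q' => (q'.1, q'.2 + Finsupp.single j 1)) ?_ ?_ ?_ ?_ ?_
    · rintro ⟨q1, q2⟩ hq
      obtain ⟨hmem, hle⟩ := Finset.mem_filter.mp hq
      refine Finset.HasAntidiagonal.mem_antidiagonal.mpr ?_
      have := Finset.HasAntidiagonal.mem_antidiagonal.mp hmem
      show q1 + (q2 - Finsupp.single j 1) = t - Finsupp.single j 1
      rw [← add_tsub_assoc_of_le hle, this]
    · rintro ⟨q1, q2⟩ hq
      have hmem := Finset.HasAntidiagonal.mem_antidiagonal.mp hq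
      refine Finset.mem_filter.mpr ⟨Finset.HasAntidiagonal.mem_antidiagonal.mpr ?_, le_add_self⟩
      show q1 + (q2 + Finsupp.single j 1) = t
      rw [← add_assoc, hmem]
      exact tsub_add_cancel_of_le ht
    · rintro ⟨q1, q2⟩ hq
      obtain ⟨_, hle⟩ := Finset.mem_filter.mp hq
      show (q1, q2 - Finsupp.single j 1 + Finsupp.single j 1) = (q1, q2)
      rw [tsub_add_cancel_of_le hle]
    · rintro ⟨q1, q2⟩ _
      show (q1, q2 + Finsupp.single j 1 - Finsupp.single j 1) = (q1, q2)
      rw [add_tsub_cancel_right]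
    · rintro ⟨q1, q2⟩ _
      rfl
  · rw [if_neg ht]
    refine Finset.sum_eq_zero fun q hq => Finset.sum_eq_zero fun α _ => ?_
    have hq2 : ¬ Finsupp.single j 1 ≤ q.2 := by
      intro hle
      exact ht (hle.trans (Finset.HasAntidiagonal.antidiagonal.snd_le hq))
    unfold tT3
    rw [if_neg hq2]

end Zcomm3

/-- The key commutation: left Moyal multiplication commutes with `Z_j = ∂_{x_j} + p_j`. -/
lemma moyal_Z (a : B k n) (j : Fin n) (v : B k n) :
    moyal a (Zop j v) = Zop j (moyal a v) := by
  funext t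
  have hS : ∀ q1 α, q1 ≤ t → xD α (a q1) ≠ 0
      → α ∈ Finset.Iic (bnd a t + Finsupp.single j 1) :=
    fun q1 α hq h => Finset.mem_Iic.mpr ((le_bnd hq h).trans le_self_add)
  rw [moyal_coeff a (Zop j v) t _ hS]
  have hrhs : Zop j (moyal a v) t = MvPolynomial.pderiv j (moyal a v t)
      + (if Finsupp.single j 1 ≤ t then moyal a v (t - Finsupp.single j 1) else 0) := rfl
  rw [hrhs, moyal_coeff a v t _ hS]
  have hpd : MvPolynomial.pderiv j (∑ q ∈ Finset.HasAntidiagonal.antidiagonal t,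
        ∑ α ∈ Finset.Iic (bnd a t + Finsupp.single j 1),
          (fk α : k)⁻¹ • (xD α (a q.1) * (dd q.2 α : k) • v (q.2 + α)))
      = ∑ q ∈ Finset.HasAntidiagonal.antidiagonal t, ∑ α ∈ Finset.Iic (bnd a t + Finsupp.single j 1),
          (tR1 a v j q α + tL1 a v j q α) := by
    rw [map_sum]
    refine Finset.sum_congr rfl fun q _ => ?_
    rw [map_sum]
    refine Finset.sum_congr rfl fun α _ => ?_
    rw [Derivation.map_smul, MvPolynomial.pderiv_mul, Derivation.map_smul, pderiv_xD, smul_add]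
    rfl
  rw [hpd]
  have hsplit : ∑ q ∈ Finset.HasAntidiagonal.antidiagonal t,
        ∑ α ∈ Finset.Iic (bnd a t + Finsupp.single j 1),
          (fk α : k)⁻¹ • (xD α (a q.1) * (dd q.2 α : k) • (Zop j v (q.2 + α)))
      = ∑ q ∈ Finset.HasAntidiagonal.antidiagonal t, ∑ α ∈ Finset.Iic (bnd a t + Finsupp.single j 1),
          (tL1 a v j q α + (tT3 a v j q α + tT1 a v j q α)) :=
    Finset.sum_congr rfl fun q _ => Finset.sum_congr rfl fun α _ => split_term a v j q α
  rw [hsplit]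
  simp only [Finset.sum_add_distrib]
  rw [sumT3 a v j t]
  have hT1 : ∑ q ∈ Finset.HasAntidiagonal.antidiagonal t,
        ∑ α ∈ Finset.Iic (bnd a t + Finsupp.single j 1), tT1 a v j q α
      = ∑ q ∈ Finset.HasAntidiagonal.antidiagonal t,
        ∑ α ∈ Finset.Iic (bnd a t + Finsupp.single j 1), tR1 a v j q α :=
    Finset.sum_congr rfl fun q hq => sumT1 a v j t q (Finset.HasAntidiagonal.antidiagonal.fst_le hq)
  rw [hT1]
  abel

section FDsec

/-- "Finite dependence": each coefficient of `L v` depends on finitely many coefficients of `v`. -/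
def FD (L : B k n → B k n) : Prop :=
  ∀ t : Fin n →₀ ℕ, ∃ N : Fin n →₀ ℕ, ∀ v w : B k n,
    (∀ s, s ≤ N → v s = w s) → L v t = L w t

lemma fd_moyal (a : B k n) : FD (fun v : B k n => moyal a v) := by
  intro t
  refine ⟨t + bnd a t, fun v w hvw => ?_⟩
  have hS : ∀ q1 α, q1 ≤ t → xD α (a q1) ≠ 0 → α ∈ Finset.Iic (bnd a t) :=
    fun q1 α hq h => Finset.mem_Iic.mpr (le_bnd hq h)
  simp only
  rw [moyal_coeff a v t _ hS, moyal_coeff a w t _ hS]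
  refine Finset.sum_congr rfl fun q hq => Finset.sum_congr rfl fun α hα => ?_
  rw [hvw (q.2 + α) (add_le_add (Finset.HasAntidiagonal.antidiagonal.snd_le hq) (Finset.mem_Iic.mp hα))]

lemma fd_comp {L L' : B k n → B k n} (h : FD L) (h' : FD L') :
    FD (fun v => L (L' v)) := by
  intro t
  obtain ⟨N, hN⟩ := h t
  classical
  choose N' hN' using h'
  refine ⟨(Finset.Iic N).sup N', fun v w hvw => ?_⟩
  refine hN _ _ fun s hs => hN' s _ _ fun s' hs' => hvw s' ?_
  exact hs'.trans (Finset.le_sup (f := N') (Finset.mem_Iic.mpr hs))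

lemma fd_sub {L L' : B k n → B k n} (h : FD L) (h' : FD L') :
    FD (fun v => L v - L' v) := by
  intro t
  obtain ⟨N, hN⟩ := h t
  obtain ⟨N', hN'⟩ := h' t
  refine ⟨N + N', fun v w hvw => ?_⟩
  simp only
  have e1 : ∀ u : B k n, (L u - L' u) t = L u t - L' u t := fun u => rfl
  rw [e1, e1, hN v w (fun s hs => hvw s (hs.trans le_self_add)),
    hN' v w (fun s hs => hvw s (hs.trans le_add_self))]

end FDsec

section Char

lemma pmon_zero : (pmon 0 : B k n) = 1 := by
  funext t
  classical
  have h1 : (1 : B k n) t = if t = 0 then 1 else 0 := MvPowerSeries.coeff_one t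
  show (if t = 0 then (1 : MvPolynomial (Fin n) k) else 0) = (1 : B k n) t
  rw [h1]

lemma Zop_pmon (j : Fin n) (s : Fin n →₀ ℕ) :
    Zop j (pmon s : B k n) = pmon (s + Finsupp.single j 1) := by
  funext t
  show MvPolynomial.pderiv j (pmon s t)
      + (if Finsupp.single j 1 ≤ t then pmon s (t - Finsupp.single j 1) else 0)
    = pmon (s + Finsupp.single j 1) t
  have h0 : MvPolynomial.pderiv j ((pmon s : B k n) t) = 0 := by
    unfold pmon
    split_ifs
    · exact Derivation.map_one_eq_zero _
    · exact map_zero _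
  rw [h0, zero_add]
  unfold pmon
  by_cases h : t = s + Finsupp.single j 1
  · rw [if_pos (h ▸ le_add_self), if_pos (by rw [h, add_tsub_cancel_right]), if_pos h]
  · rw [if_neg h]
    by_cases hle : Finsupp.single j 1 ≤ t
    · rw [if_pos hle, if_neg]
      intro heq
      exact h (by rw [← tsub_add_cancel_of_le hle, heq])
    · rw [if_neg hle]

lemma Mxf_zero (f : MvPolynomial (Fin n) k) : Mxf f (0 : B k n) = 0 := by
  funext t
  show f * (0 : B k n) t = (0 : B k n) t
  show f * 0 = 0
  rw [mul_zero]

lemma vanish (L : B k n → B k n)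
    (hadd : ∀ u v, L (u + v) = L u + L v)
    (hFD : FD L)
    (hMx : ∀ f v, L (Mxf f v) = Mxf f (L v))
    (hZ : ∀ j v, L (Zop j v) = Zop j (L v))
    (h1 : L 1 = 0) : ∀ v, L v = 0 := by
  classical
  have hL0 : L 0 = 0 := by
    have := hadd 0 0
    rw [add_zero] at this
    exact (left_eq_add.mp this)
  have hZ0 : ∀ j : Fin n, Zop j (0 : B k n) = 0 := by
    intro j
    funext t
    show MvPolynomial.pderiv j ((0 : B k n) t)
        + (if Finsupp.single j 1 ≤ t then (0 : B k n) (t - Finsupp.single j 1) else 0)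
      = (0 : B k n) t
    show MvPolynomial.pderiv j (0 : MvPolynomial (Fin n) k)
        + (if Finsupp.single j 1 ≤ t then (0 : MvPolynomial (Fin n) k) else 0) = 0
    simp
  have hpmon : ∀ (N : ℕ) (s : Fin n →₀ ℕ), (∑ i, s i) = N → L (pmon s) = 0 := by
    intro N
    induction N using Nat.strong_induction_on with
    | _ N ih =>
      intro s hdeg
      by_cases hs : s = 0
      · rw [hs, pmon_zero, h1]
      · obtain ⟨j, hj⟩ := Finsupp.support_nonempty_iff.mpr hs
        have hj1 : 1 ≤ s j := Nat.one_le_iff_ne_zero.mpr (Finsupp.mem_support_iff.mp hj)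
        have hsingle : Finsupp.single j 1 ≤ s := Finsupp.single_le_iff.mpr hj1
        have hrec : s = (s - Finsupp.single j 1) + Finsupp.single j 1 :=
          (tsub_add_cancel_of_le hsingle).symm
        have hdeg' : (∑ i, (s - Finsupp.single j 1 : Fin n →₀ ℕ) i) < N := by
          have he : ∀ i ∈ Finset.univ.erase j,
              (s - Finsupp.single j 1 : Fin n →₀ ℕ) i = s i := by
            intro i hi
            rw [Finsupp.tsub_apply, Finsupp.single_apply,
              if_neg (Finset.mem_erase.mp hi).1.symm, tsub_zero]
          have hjj : (s - Finsupp.single j 1 : Fin n →₀ ℕ) j = s j - 1 := by simp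
          have hsplit1 : ∑ i, (s - Finsupp.single j 1 : Fin n →₀ ℕ) i
              = (s j - 1) + ∑ i ∈ Finset.univ.erase j, s i := by
            rw [← Finset.add_sum_erase _ _ (Finset.mem_univ j), hjj,
              Finset.sum_congr rfl he]
          have hsplit2 : ∑ i, s i = s j + ∑ i ∈ Finset.univ.erase j, s i :=
            (Finset.add_sum_erase _ _ (Finset.mem_univ j)).symm
          rw [← hdeg, hsplit1, hsplit2]
          omega
      --
        calc L (pmon s) = L (Zop j (pmon (s - Finsupp.single j 1))) := by
              rw [Zop_pmon, ← hrec]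
          _ = Zop j (L (pmon (s - Finsupp.single j 1))) := hZ j _
          _ = Zop j 0 := by rw [ih _ hdeg' _ rfl]
          _ = 0 := hZ0 j
  intro v
  funext t
  obtain ⟨N, hN⟩ := hFD t
  set v' : B k n := ∑ s ∈ Finset.Iic N, Mxf (v s) (pmon s) with hv'def
  have hv' : ∀ s', s' ≤ N → v s' = v' s' := by
    intro s' hs'
    have e1 : v' s' = ∑ s ∈ Finset.Iic N, (v s) * (pmon s s' : MvPolynomial (Fin n) k) := by
      rw [show v' s' = MvPowerSeries.coeff s' v' from rfl, hv'def, map_sum]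
      rfl
    rw [e1]
    rw [Finset.sum_eq_single s']
    · unfold pmon
      rw [if_pos rfl, mul_one]
    · intro s _ hne
      unfold pmon
      rw [if_neg (fun hh => hne hh.symm), mul_zero]
    · intro hnot
      exact absurd (Finset.mem_Iic.mpr hs') hnot
  rw [hN v v' hv']
  have hLsum : L v' = ∑ s ∈ Finset.Iic N, L (Mxf (v s) (pmon s)) := by
    rw [hv'def]
    exact map_sum (AddMonoidHom.mk' L hadd) _ _
  rw [hLsum]
  have : ∀ s ∈ Finset.Iic N, L (Mxf (v s) (pmon s)) = 0 := by
    intro s hs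
    rw [hMx, hpmon _ s rfl, Mxf_zero]
  rw [Finset.sum_congr rfl this, Finset.sum_const_zero]

end Char

end MoyalAux

namespace MoyalAux
set_option linter.unusedSectionVars false

section SubLemmas

lemma sub_apply' (u w : B k n) (t : Fin n →₀ ℕ) : (u - w) t = u t - w t := rfl

lemma Mxf_sub (f : MvPolynomial (Fin n) k) (u w : B k n) :
    Mxf f u - Mxf f w = Mxf f (u - w) := by
  funext t
  rw [sub_apply']
  show f * (u t) - f * (w t) = f * ((u - w) t)
  rw [sub_apply', mul_sub]

lemma Zop_sub (j : Fin n) (u w : B k n) :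
    Zop j u - Zop j w = Zop j (u - w) := by
  funext t
  rw [sub_apply']
  show (MvPolynomial.pderiv j (u t) + (if Finsupp.single j 1 ≤ t then u (t - Finsupp.single j 1) else 0))
      - (MvPolynomial.pderiv j (w t) + (if Finsupp.single j 1 ≤ t then w (t - Finsupp.single j 1) else 0))
    = MvPolynomial.pderiv j ((u - w) t)
      + (if Finsupp.single j 1 ≤ t then (u - w) (t - Finsupp.single j 1) else 0)
  rw [sub_apply', map_sub, sub_apply']
  split_ifs
  · abel
  · abel

end SubLemmas

end MoyalAux

/-- The Moyal-type product is associative. -/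
theorem moyal_assoc (a b c : B k n) :
    moyal (moyal a b) c = moyal a (moyal b c) := by
  open MoyalAux in
  refine sub_eq_zero.mp ?_
  refine MoyalAux.vanish (fun v => moyal (moyal a b) v - moyal a (moyal b v))
    ?_ ?_ ?_ ?_ ?_ c
  · intro u v
    simp only [MoyalAux.moyal_add_right]
    abel
  · exact MoyalAux.fd_sub (MoyalAux.fd_moyal _)
      (MoyalAux.fd_comp (MoyalAux.fd_moyal a) (MoyalAux.fd_moyal b))
  · intro f v
    simp only [MoyalAux.moyal_Mxf]
    rw [MoyalAux.Mxf_sub]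
  · intro j v
    simp only [MoyalAux.moyal_Z]
    rw [MoyalAux.Zop_sub]
  · show moyal (moyal a b) 1 - moyal a (moyal b 1) = 0
    rw [MoyalAux.moyal_one, MoyalAux.moyal_one, sub_self]
end

section
/- In the twisted setting, an element ω ∈ B satisfies the twisted commutation relation x^i • ω − ω • (γ·x^i) = 0 for all i if and only if ω = E_γ · f(x) for some f depending only on x, where E_γ = exp(−⟨p, x − γ·x⟩); i.e., ω solves the system of PDEs (x^i − γ·x^i)ω + ∂ω/∂p_i = 0. -/
/-!
STATEMENT 11.  In the twisted setting, `ω ∈ B` satisfies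
`x^i • ω − ω • (γ·x^i) = 0` for all `i` (equivalently, the PDEs
`(x^i − γ·x^i)ω + ∂ω/∂p_i = 0`) if and only if `ω = E_γ · f(x)` for some
polynomial `f` in the `x`-variables alone, where `E_γ = exp(−⟨p, x − γ·x⟩)`
and `γ` is a linear automorphism with coordinate-action matrix `M`.
-/

open MvPowerSeries

variable (k : Type*) [Field k] [CharZero k] (n : ℕ)

variable {k n}

/-- `E_M = exp(−⟨p, x − Mx⟩)`, where `(Mx)^i = Σ_j M i j x^j`:  the coefficient of
`p^m` is `(1/m!) ∏ᵢ (−(x − Mx)^i)^{mᵢ}`. -/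
noncomputable def EgB (M : Matrix (Fin n) (Fin n) k) : B k n :=
  fun m => ((m.prod fun _ j => (j.factorial : k))⁻¹) •
    ∏ i, (-(MvPolynomial.X i - ∑ j, M i j • MvPolynomial.X j)) ^ (m i)

/-- The coordinate function `x^i ∈ B`. -/
noncomputable def xel (i : Fin n) : B k n :=
  MvPowerSeries.C (MvPolynomial.X i)

/-- `γ·x^i = Σ_j Mᵢⱼ x^j ∈ B`. -/
noncomputable def gxel (M : Matrix (Fin n) (Fin n) k) (i : Fin n) : B k n :=
  MvPowerSeries.C (∑ j, M i j • MvPolynomial.X j)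

set_option linter.unusedSectionVars false
lemma coeffB (b : B k n) (m : Fin n →₀ ℕ) :
    MvPowerSeries.coeff m b = b m := rfl

lemma xD_zero (q : MvPolynomial (Fin n) k) : xD 0 q = q := by
  simp [xD, MvPolynomial.support_sum_monomial_coeff]

lemma xD_zero_poly (α : Fin n →₀ ℕ) : xD α (0 : MvPolynomial (Fin n) k) = 0 := by
  simp [xD]

lemma pD_zero (b : B k n) : pD 0 b = b := by
  funext m
  simp [pD, coeffB]

lemma pD_single_apply (i : Fin n) (b : B k n) (m : Fin n →₀ ℕ) :
    pD (Finsupp.single i 1) b m = ((m i + 1 : ℕ) : k) • b (m + Finsupp.single i 1) := by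
  have : ∀ j, (m j + (Finsupp.single i 1) j).descFactorial ((Finsupp.single i 1) j)
      = if i = j then m i + 1 else 1 := by
    intro j
    rcases eq_or_ne i j with rfl | h <;> simp [Finsupp.single_apply, *]
  simp only [pD, coeffB, this, Finset.prod_ite_eq, Finset.mem_univ, if_true]

lemma xD_X (i : Fin n) (α : Fin n →₀ ℕ) :
    xD α (MvPolynomial.X i : MvPolynomial (Fin n) k) =
      if α = 0 then MvPolynomial.X i
      else if α = Finsupp.single i 1 then 1 else 0 := by
  rw [xD, MvPolynomial.support_X, Finset.sum_singleton]
  split_ifs with h0 h1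
  · subst h0; simp [MvPolynomial.X]
  · subst h1
    have : ∀ j, ((Finsupp.single i 1 : Fin n →₀ ℕ) j).descFactorial
        ((Finsupp.single i 1 : Fin n →₀ ℕ) j) = 1 := by
      intro j; rcases eq_or_ne i j with rfl | h <;> simp [Finsupp.single_apply, *]
    simp [this]
  · have : (∏ j, ((Finsupp.single i 1 : Fin n →₀ ℕ) j).descFactorial (α j)) = 0 := by
      by_cases hall : ∀ j, j ≠ i → α j = 0
      · have hαi : 2 ≤ α i := by
          by_contra hlt
          push_neg at hlt
          interval_cases h : α i
          · refine h0 ?_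
            ext j
            rcases eq_or_ne i j with rfl | hj
            · simpa using h
            · simpa using hall j (Ne.symm hj)
          · refine h1 ?_
            ext j
            rcases eq_or_ne i j with rfl | hj
            · simp [h]
            · simp [hall j (Ne.symm hj), Finsupp.single_apply, hj]
        refine Finset.prod_eq_zero (Finset.mem_univ i) ?_
        have : ((Finsupp.single i 1 : Fin n →₀ ℕ)) i = 1 := by simp
        rw [this]
        exact Nat.descFactorial_eq_zero_iff_lt.mpr (by omega)
      · push_neg at hall
        obtain ⟨j, hj, hαj⟩ := hall
        refine Finset.prod_eq_zero (Finset.mem_univ j) ?_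
        have : ((Finsupp.single i 1 : Fin n →₀ ℕ)) j = 0 :=
          Finsupp.single_eq_of_ne' (Ne.symm hj)
        rw [this]
        exact Nat.descFactorial_eq_zero_iff_lt.mpr (by omega)
    simp [this]

lemma moyal_xel_apply (i : Fin n) (ω : B k n) (m : Fin n →₀ ℕ) :
    moyal (xel i) ω m = MvPolynomial.X i * ω m
      + ((m i + 1 : ℕ) : k) • ω (m + Finsupp.single i 1) := by
  have hne : (0 : Fin n →₀ ℕ) ≠ Finsupp.single i 1 :=
    fun h => by simpa using congrFun (congrArg (⇑) h) i
  show (∑ q ∈ Finset.HasAntidiagonal.antidiagonal m, ∑ᶠ α : Fin n →₀ ℕ,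
    ((α.prod fun _ j => (j.factorial : k))⁻¹) •
      (xD α (MvPowerSeries.coeff q.1 (xel i)) * MvPowerSeries.coeff q.2 (pD α ω))) = _
  rw [Finset.sum_eq_single_of_mem ((0 : Fin n →₀ ℕ), m) (by simp)]
  · rw [finsum_eq_finset_sum_of_support_subset _
      (s := {0, Finsupp.single i 1}) ?_]
    · rw [Finset.sum_pair hne]
      simp only [xel, MvPowerSeries.coeff_C, if_pos rfl, xD_X, if_pos rfl, coeffB,
        Finsupp.prod_zero_index, inv_one, one_smul, pD_zero, pD_single_apply,
        if_neg (Ne.symm hne), if_pos rfl]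
      rw [Finsupp.prod_single_index (by simp)]
      simp [xD_zero, xD_X]
    · intro α hα
      simp only [Finset.coe_insert, Finset.coe_singleton, Set.mem_insert_iff,
        Set.mem_singleton_iff]
      by_contra hmem
      push_neg at hmem
      apply hα
      simp [xel, MvPowerSeries.coeff_C, xD_X, if_neg hmem.1, if_neg hmem.2]
  · intro q hq hq'
    have h1 : q.1 ≠ 0 := by
      rintro h0
      apply hq'
      rw [Finset.HasAntidiagonal.mem_antidiagonal] at hq
      have : q.2 = m := by rw [← hq, h0, zero_add]
      exact Prod.ext h0 this
    have : MvPowerSeries.coeff q.1 (xel (k := k) i) = 0 := by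
      rw [xel, MvPowerSeries.coeff_C, if_neg h1]
    simp [this, xD_zero_poly]

lemma moyal_gxel_apply (M : Matrix (Fin n) (Fin n) k) (i : Fin n) (ω : B k n) (m : Fin n →₀ ℕ) :
    moyal ω (gxel M i) m = ω m * ∑ j, M i j • MvPolynomial.X j := by
  show (∑ q ∈ Finset.HasAntidiagonal.antidiagonal m, ∑ᶠ α : Fin n →₀ ℕ,
    ((α.prod fun _ j => (j.factorial : k))⁻¹) •
      (xD α (MvPowerSeries.coeff q.1 ω) * MvPowerSeries.coeff q.2 (pD α (gxel M i)))) = _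
  have hco : ∀ (β α : Fin n →₀ ℕ), MvPowerSeries.coeff β
      (pD α (gxel M i)) = ((∏ j, Nat.descFactorial (β j + α j) (α j) : ℕ) : k) •
        (if β + α = 0 then (∑ j, M i j • MvPolynomial.X j) else 0) := by
    intro β α
    rw [coeffB, pD, coeffB]
    congr 1
    exact MvPowerSeries.coeff_C _ _
  rw [Finset.sum_eq_single_of_mem (m, (0 : Fin n →₀ ℕ)) (by simp)]
  · rw [finsum_eq_single _ 0]
    · rw [hco]
      simp [xD_zero, coeffB, Finsupp.prod_zero_index]
    · intro α hα
      rw [hco]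
      have : (0 : Fin n →₀ ℕ) + α ≠ 0 := by simpa using hα
      rw [if_neg this]
      simp
  · intro q hq hq'
    have h2 : q.2 ≠ 0 := by
      rintro h0
      apply hq'
      rw [Finset.HasAntidiagonal.mem_antidiagonal] at hq
      have : q.1 = m := by rw [← hq, h0, add_zero]
      exact Prod.ext this h0
    simp [hco, h2]

lemma prod_factorial_add_single (m : Fin n →₀ ℕ) (i : Fin n) :
    (∏ j, (((m + Finsupp.single i 1 : Fin n →₀ ℕ)) j).factorial) = (m i + 1) * ∏ j, (m j).factorial := by
  have h : ∀ j, (((m + Finsupp.single i 1 : Fin n →₀ ℕ)) j).factorial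
      = (if i = j then m i + 1 else 1) * (m j).factorial := by
    intro j
    rcases eq_or_ne i j with rfl | h
    · simp [Nat.factorial_succ]
    · simp [Finsupp.single_apply, h]
  rw [Finset.prod_congr rfl fun j _ => h j, Finset.prod_mul_distrib, Finset.prod_ite_eq]
  simp

lemma prod_pow_add_single (u : Fin n → MvPolynomial (Fin n) k) (m : Fin n →₀ ℕ) (i : Fin n) :
    (∏ j, (u j) ^ (((m + Finsupp.single i 1 : Fin n →₀ ℕ)) j)) = u i * ∏ j, (u j) ^ (m j) := by
  have h : ∀ j, (u j) ^ (((m + Finsupp.single i 1 : Fin n →₀ ℕ)) j)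
      = (if i = j then u i else 1) * (u j) ^ (m j) := by
    intro j
    rcases eq_or_ne i j with rfl | h
    · simp [pow_succ, mul_comm]
    · simp [Finsupp.single_apply, h]
  rw [Finset.prod_congr rfl fun j _ => h j, Finset.prod_mul_distrib, Finset.prod_ite_eq]
  simp

lemma EgB_apply (M : Matrix (Fin n) (Fin n) k) (m : Fin n →₀ ℕ) :
    EgB M m = ((∏ j, (m j).factorial : ℕ) : k)⁻¹ •
      ∏ j, (-(MvPolynomial.X j - ∑ l, M j l • MvPolynomial.X l)) ^ (m j) := by
  show ((m.prod fun _ j => (j.factorial : k))⁻¹) • _ = _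
  rw [Finsupp.prod_fintype _ _ (by simp), Nat.cast_prod]

lemma mul_C_apply (a : B k n) (f : MvPolynomial (Fin n) k) (m : Fin n →₀ ℕ) :
    (a * MvPowerSeries.C f : B k n) m = a m * f := by
  show MvPowerSeries.coeff m
    (a * MvPowerSeries.C f) = a m * f
  rw [MvPowerSeries.coeff_mul,
    Finset.sum_eq_single_of_mem (m, (0 : Fin n →₀ ℕ)) (by simp)]
  · simp [MvPowerSeries.coeff_C, coeffB]
  · intro q hq hq'
    have h2 : q.2 ≠ 0 := by
      rintro h0
      apply hq'
      rw [Finset.HasAntidiagonal.mem_antidiagonal] at hq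
      have : q.1 = m := by rw [← hq, h0, add_zero]
      exact Prod.ext this h0
    simp [MvPowerSeries.coeff_C, h2]

lemma recursion_solution (V : Fin n → MvPolynomial (Fin n) k) (ω : B k n)
    (key : ∀ (m : Fin n →₀ ℕ) (i : Fin n),
      ((m i + 1 : ℕ) : k) • ω (m + Finsupp.single i 1) = V i * ω m) :
    ∀ m : Fin n →₀ ℕ, ((∏ j, (m j).factorial : ℕ) : k) • ω m
      = (∏ j, (V j) ^ (m j)) * ω 0 := by
  have main : ∀ N : ℕ, ∀ m : Fin n →₀ ℕ, (∑ j, m j) = N →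
      ((∏ j, (m j).factorial : ℕ) : k) • ω m = (∏ j, (V j) ^ (m j)) * ω 0 := by
    intro N
    induction N with
    | zero =>
      intro m hm
      have hm0 : m = 0 := by
        ext j
        exact Finset.sum_eq_zero_iff.mp hm j (Finset.mem_univ j)
      subst hm0; simp
    | succ N ih =>
      intro m hm
      have hex : ∃ i, m i ≠ 0 := by
        by_contra hc
        push_neg at hc
        simp [hc] at hm
      obtain ⟨i, hi⟩ := hex
      set m' : Fin n →₀ ℕ := m - Finsupp.single i 1 with hm'def
      have hmm : m' + Finsupp.single i 1 = m := by
        ext j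
        rcases eq_or_ne i j with rfl | h
        · simp [hm'def, Finsupp.add_apply, Finsupp.tsub_apply, Finsupp.single_apply]
          omega
        · simp [hm'def, Finsupp.add_apply, Finsupp.tsub_apply, Finsupp.single_apply, h]
      have hsum' : (∑ j, m' j) = N := by
        have h1 : (∑ j, ((m' + Finsupp.single i 1 : Fin n →₀ ℕ)) j) = N + 1 := by
          rw [hmm]; exact hm
        have hs : (∑ j, ((Finsupp.single i 1 : Fin n →₀ ℕ)) j) = 1 := by
          simp [Finsupp.single_apply]
        simp only [Finsupp.add_apply, Finset.sum_add_distrib, hs] at h1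
        omega
      have hk := key m' i
      rw [← hmm, prod_factorial_add_single, prod_pow_add_single, Nat.cast_mul, mul_comm,
        mul_smul, hk, ← mul_smul_comm, ih m' hsum', mul_assoc]
  exact fun m => main (∑ j, m j) m rfl

theorem twisted_invariants (M : Matrix (Fin n) (Fin n) k) (hM : IsUnit M) (ω : B k n) :
    (∀ i, moyal (xel i) ω = moyal ω (gxel M i)) ↔
    (∃ f : MvPolynomial (Fin n) k,
      ω = EgB M * MvPowerSeries.C f) := by
  have Hrec : (∀ i, moyal (xel i) ω = moyal ω (gxel M i)) ↔
      (∀ (m : Fin n →₀ ℕ) (i : Fin n), ((m i + 1 : ℕ) : k) • ω (m + Finsupp.single i 1)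
        = -(MvPolynomial.X i - ∑ j, M i j • MvPolynomial.X j) * ω m) := by
    constructor
    · intro h m i
      have h2 := congrFun (h i) m
      rw [moyal_xel_apply, moyal_gxel_apply] at h2
      rw [MvPolynomial.smul_eq_C_mul] at h2 ⊢
      linear_combination h2
    · intro h i
      funext m
      rw [moyal_xel_apply, moyal_gxel_apply]
      have h2 := h m i
      rw [MvPolynomial.smul_eq_C_mul] at h2 ⊢
      linear_combination h2
  rw [Hrec]
  constructor
  · intro key
    refine ⟨ω 0, ?_⟩
    have Q := recursion_solution
      (fun i => -(MvPolynomial.X i - ∑ j, M i j • MvPolynomial.X j)) ω key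
    funext m
    rw [mul_C_apply, EgB_apply]
    have hF : ((∏ j, (m j).factorial : ℕ) : k) ≠ 0 :=
      Nat.cast_ne_zero.mpr (Finset.prod_ne_zero_iff.mpr fun j _ => Nat.factorial_ne_zero _)
    rw [smul_mul_assoc, eq_inv_smul_iff₀ hF]
    exact Q m
  · rintro ⟨f, hf⟩ m i
    subst hf
    rw [mul_C_apply, mul_C_apply, EgB_apply, EgB_apply, prod_factorial_add_single,
      prod_pow_add_single, smul_mul_assoc, smul_mul_assoc, smul_smul, mul_smul_comm]
    have hF : ((∏ j, (m j).factorial : ℕ) : k) ≠ 0 :=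
      Nat.cast_ne_zero.mpr (Finset.prod_ne_zero_iff.mpr fun j _ => Nat.factorial_ne_zero _)
    have hc : ((m i + 1 : ℕ) : k) ≠ 0 := Nat.cast_ne_zero.mpr (Nat.succ_ne_zero _)
    have hscal : ((m i + 1 : ℕ) : k) * (((m i + 1) * ∏ j, (m j).factorial : ℕ) : k)⁻¹
        = ((∏ j, (m j).factorial : ℕ) : k)⁻¹ := by
      have hc' : ((m i : k) + 1) ≠ 0 := by exact_mod_cast hc
      push_cast
      rw [mul_inv, ← mul_assoc, mul_inv_cancel₀ hc', one_mul]
    rw [hscal, mul_assoc]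
end

section
/- For the coresolution 𝒜 = k[x][[p]] ⊗ Λ(dp) of A = k[x^1,…,x^n] with the Moyal-type product and de Rham differential in p, the constant bivector λ = Σ_{i<j} π^{ij} dp_i ∧ dp_j (π^{ij} ∈ k antisymmetric) lies in the center of 𝒜, and the induced first-order deformation μ_1 = δhδhλ of the polynomial algebra k[x] is the constant Poisson bracket μ_1(a,b) = (1/2) Σ_{i,j} π^{ij} (∂a/∂x^i)(∂b/∂x^j). -/
/-!
STATEMENT 17.  For the coresolution `𝒜 = k[x][[p]] ⊗ Λ(dp)` of `A = k[x¹,…,xⁿ]`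
with the Moyal-type product and the de Rham differential in `p`, any constant
bivector `λ = π^{ij} dp_i ∧ dp_j` (`π^{ij} ∈ k` antisymmetric) lies in the center
of `𝒜`, and the induced first-order deformation `μ₁ = δhδhlam` of `k[x]` is the
constant Poisson bracket `μ₁(a,b) = (1/2) Σ_{i,j} π^{ij} (∂a/∂x^i)(∂b/∂x^j)`.
Here `h` is the standard Poincaré homotopy, `δ` is the Hochschild differential of
the DG-algebra (with the evaluation conventions of Sharapov–Skvortsov), and the
evaluation of `μ₁(a,b)` sets `p = 0` at the end.
-/

open MvPowerSeries

variable (k : Type*) [Field k] [CharZero k] (n : ℕ)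

variable {k n}

/-- `l`-forms `ω = ω^{i₁…i_l}(x,p) dp_{i₁} ∧ … ∧ dp_{i_l}`, given by their
coefficient functions. -/
abbrev Form (k : Type*) [Field k] (n l : ℕ) := (Fin l → Fin n) → B k n

/-- Antisymmetry of the coefficient functions of a form. -/
def IsAntisym {l : ℕ} (ω : Form k n l) : Prop :=
  ∀ (τ : Equiv.Perm (Fin l)) (v : Fin l → Fin n),
    ω (v ∘ τ) = (Equiv.Perm.sign τ : ℤ) • ω v

/-- The de Rham-type differential in the `p`-variables:
`(dω)_{v} = Σ_a (−1)^a ∂_{p_{v a}} ω_{v ∘ (omit a)}`. -/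
noncomputable def dOp (l : ℕ) (ω : Form k n l) : Form k n (l + 1) :=
  fun v => ∑ a : Fin (l + 1), ((-1 : ℤ) ^ (a : ℕ)) •
    pD (Finsupp.single (v a) 1) (ω (v ∘ a.succAbove))

/-- The building block of the standard homotopy:  the formal integral
`∫₀¹ ds s^{l-1} b(x, sp) p_j`, written coefficientwise:  the coefficient of `p^m`
is `(1/(l + |m| − 1))` times the coefficient of `p^{m − e_j}` of `b`. -/
noncomputable def hInt (l : ℕ) (j : Fin n) (b : B k n) : B k n :=
  fun m => if m j = 0 then 0 else
    (((l + (m.sum fun _ c => c) - 1 : ℕ) : k)⁻¹) •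
      MvPowerSeries.coeff (m - Finsupp.single j 1) b

/-- The standard contracting homotopy
`(hω) = ∫₀¹ ds s^{l-1} ω^{i₁…i_l}(x,sp) p_{i₁} dp_{i₂}∧…∧dp_{i_l}`. -/
noncomputable def hOp (l : ℕ) (ω : Form k n (l + 1)) : Form k n l :=
  fun w => ∑ j : Fin n, hInt (l + 1) j (ω (Fin.cons j w))

/-- A polynomial in the `x`-variables, as an element of `B`. -/
noncomputable def Cx (f : MvPolynomial (Fin n) k) : B k n :=
  MvPowerSeries.C (σ := Fin n) (R := MvPolynomial (Fin n) k) f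

/-- The constant bivector `λ = π^{ij} dp_i ∧ dp_j`, in components. -/
noncomputable def lam (π : Fin n → Fin n → k) : Form k n 2 :=
  fun v => Cx (MvPolynomial.C (π (v 1) (v 0)))

/-- `δ` on elements (`0`-cochains) of the resolution: `(δc)(a) = a•c − c•a`. -/
noncomputable def δ0 (c : B k n) (a : MvPolynomial (Fin n) k) : B k n :=
  moyal (Cx a) c - moyal c (Cx a)

/-- `δ` on the components of a `1`-form-valued `0`-cochain. -/
noncomputable def δ0F (ω : Form k n 1) (a : MvPolynomial (Fin n) k) : Form k n 1 :=
  fun v => moyal (Cx a) (ω v) - moyal (ω v) (Cx a)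

/-- The `B`-valued `1`-cochain `h δ h λ`. -/
noncomputable def hδhlam (π : Fin n → Fin n → k) (a : MvPolynomial (Fin n) k) : B k n :=
  hOp 0 (δ0F (hOp 1 (lam π)) a) (fun i => i.elim0)

/-- The first-order deformation `μ₁ = δ h δ h λ` (evaluation conventions as in the
paper). -/
noncomputable def μ1 (π : Fin n → Fin n → k) (a b : MvPolynomial (Fin n) k) : B k n :=
  moyal (Cx a) (hδhlam π b) - hδhlam π (a * b) + moyal (hδhlam π a) (Cx b)

set_option linter.unusedSectionVars false

lemma xD_single (i : Fin n) (q : MvPolynomial (Fin n) k) :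
    xD (Finsupp.single i 1) q = MvPolynomial.pderiv i q := by
  conv_rhs => rw [q.as_sum, map_sum]
  unfold xD
  refine Finset.sum_congr rfl fun β _ => ?_
  rw [MvPolynomial.pderiv_monomial]
  congr 1
  rw [mul_comm]
  congr 1
  have : ∀ l, Nat.descFactorial (β l) ((Finsupp.single i 1) l) = if l = i then β i else 1 := by
    intro l
    by_cases h : l = i
    · subst h; simp
    · simp [Finsupp.single_eq_of_ne (Ne.symm h), h]
  rw [Finset.prod_congr rfl fun l _ => this l, Finset.prod_ite_eq' Finset.univ i (fun _ => β i)]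
  simp

lemma xD_C_ne {α : Fin n →₀ ℕ} (hα : α ≠ 0) (c : k) :
    xD α (MvPolynomial.C c : MvPolynomial (Fin n) k) = 0 := by
  unfold xD
  refine Finset.sum_eq_zero fun β hβ => ?_
  have hβ0 : β = 0 := by
    by_contra hb
    rw [MvPolynomial.mem_support_iff, MvPolynomial.coeff_C] at hβ
    rw [if_neg (fun h => hb h.symm)] at hβ
    exact hβ rfl
  subst hβ0
  obtain ⟨i, hi⟩ : ∃ i, α i ≠ 0 := by
    by_contra h; push_neg at h; exact hα (Finsupp.ext fun i => h i)
  have h0 : ((∏ i, Nat.descFactorial ((0 : Fin n →₀ ℕ) i) (α i) : ℕ) : k) = 0 := by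
    have : (∏ i, Nat.descFactorial ((0 : Fin n →₀ ℕ) i) (α i)) = 0 := by
      refine Finset.prod_eq_zero (Finset.mem_univ i) ?_
      obtain ⟨m, hm⟩ := Nat.exists_eq_succ_of_ne_zero hi
      simp [hm]
    rw [this]; exact Nat.cast_zero
  rw [h0, zero_mul, map_zero]

lemma deg_eq_zero {m : Fin n →₀ ℕ} (h : (m.sum fun _ c => c) = 0) : m = 0 := by
  ext i
  by_contra hi
  rw [Finsupp.sum] at h
  exact hi (Finset.sum_eq_zero_iff.mp h i (Finsupp.mem_support_iff.mpr hi))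

lemma deg_add (m α : Fin n →₀ ℕ) :
    ((m + α).sum fun _ c => c) = (m.sum fun _ c => c) + (α.sum fun _ c => c) :=
  Finsupp.sum_add_index' (fun _ => rfl) (fun _ _ _ => rfl)

lemma deg_single (j : Fin n) : ((Finsupp.single j 1 : Fin n →₀ ℕ).sum fun _ c => c) = 1 := by
  simp

lemma add_ne_single {m α : Fin n →₀ ℕ} (hm : m ≠ 0) (hα : α ≠ 0) (j : Fin n) :
    m + α ≠ Finsupp.single j 1 := by
  intro h
  have h2 : ((m + α).sum fun _ c => c) = 1 := by rw [h]; exact deg_single j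
  rw [deg_add] at h2
  have h3 : (m.sum fun _ c => c) ≠ 0 := fun h' => hm (deg_eq_zero h')
  have h4 : (α.sum fun _ c => c) ≠ 0 := fun h' => hα (deg_eq_zero h')
  omega

lemma single_ne_zero' (j : Fin n) : (Finsupp.single j 1 : Fin n →₀ ℕ) ≠ 0 := by
  intro h
  have := DFunLike.congr_fun h j
  simp at this

lemma sumIf {M : Type*} [AddCommMonoid M] (Q : Fin n → M) (j : Fin n) :
    (∑ i, if Finsupp.single j (1:ℕ) = Finsupp.single i (1:ℕ) then Q i else 0) = Q j := by
  rw [Finset.sum_eq_single_of_mem j (Finset.mem_univ j)]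
  · simp
  · intro i _ hij
    rw [if_neg]
    exact fun h => hij ((Finsupp.single_left_inj one_ne_zero).mp h).symm

lemma sumIfZero {M : Type*} [AddCommMonoid M] (Q : Fin n → M) {m : Fin n →₀ ℕ}
    (hm : ∀ j, m ≠ Finsupp.single j 1) :
    (∑ j, if m = Finsupp.single j (1:ℕ) then Q j else 0) = 0 :=
  Finset.sum_eq_zero fun j _ => if_neg (hm j)

lemma prod_desc_single (j : Fin n) :
    (∏ i, Nat.descFactorial ((0:Fin n →₀ ℕ) i + (Finsupp.single j (1:ℕ)) i)
      ((Finsupp.single j (1:ℕ)) i)) = 1 := by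
  refine Finset.prod_eq_one fun i _ => ?_
  by_cases h : i = j
  · subst h; simp
  · simp [Finsupp.single_eq_of_ne' (Ne.symm h)]

/-! ### coefficient formulas -/

lemma coeff_moyal (a b : B k n) (m : Fin n →₀ ℕ) :
    MvPowerSeries.coeff m (moyal a b) = ∑ q ∈ Finset.HasAntidiagonal.antidiagonal m, ∑ᶠ α : Fin n →₀ ℕ,
      ((α.prod fun _ j => (j.factorial : k))⁻¹) •
        (xD α (MvPowerSeries.coeff q.1 a) * MvPowerSeries.coeff q.2 (pD α b)) := rfl

lemma coeff_pD (α : Fin n →₀ ℕ) (b : B k n) (m : Fin n →₀ ℕ) :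
    MvPowerSeries.coeff m (pD α b)
      = ((∏ i, Nat.descFactorial (m i + α i) (α i) : ℕ) : k) •
        MvPowerSeries.coeff (m + α) b := rfl

lemma coeff_Cx (f : MvPolynomial (Fin n) k) (m : Fin n →₀ ℕ) :
    MvPowerSeries.coeff m (Cx f) = if m = 0 then f else 0 :=
  MvPowerSeries.coeff_C m f

lemma fact0 : (((0 : Fin n →₀ ℕ).prod fun _ j => (j.factorial : k))⁻¹) = 1 := by
  simp

lemma factE (j : Fin n) :
    (((Finsupp.single j (1:ℕ)).prod fun _ c => (c.factorial : k))⁻¹) = 1 := by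
  rw [Finsupp.prod_single_index] <;> simp

lemma descD0 (m : Fin n →₀ ℕ) :
    ((∏ i, Nat.descFactorial (m i + (0 : Fin n →₀ ℕ) i) ((0 : Fin n →₀ ℕ) i) : ℕ) : k) = 1 := by
  simp

lemma coeff_moyal_constRight (c : B k n) (f : MvPolynomial (Fin n) k) (m : Fin n →₀ ℕ) :
    MvPowerSeries.coeff m (moyal c (Cx f)) = MvPowerSeries.coeff m c * f := by
  rw [coeff_moyal]
  rw [Finset.sum_eq_single_of_mem (m, 0) (Finset.HasAntidiagonal.mem_antidiagonal.mpr (add_zero m))]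
  · rw [finsum_eq_single _ 0 ?h0]
    · rw [fact0, one_smul, xD_zero, coeff_pD, descD0, one_smul, zero_add, coeff_Cx, if_pos rfl]
    · intro α hα
      rw [coeff_pD, coeff_Cx, if_neg (by simpa using hα), smul_zero, mul_zero, smul_zero]
  · intro q hq hne
    have hq2 : q.2 ≠ 0 := by
      intro h
      exact hne (Prod.ext (by rw [← Finset.HasAntidiagonal.mem_antidiagonal.mp hq, h, add_zero]) h)
    refine finsum_eq_zero_of_forall_eq_zero fun α => ?_
    rw [coeff_pD, coeff_Cx, if_neg, smul_zero, mul_zero, smul_zero]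
    intro h
    apply hq2
    ext i
    have := DFunLike.congr_fun h i
    simp only [Finsupp.add_apply, Finsupp.coe_zero, Pi.zero_apply] at this ⊢
    omega

lemma coeff_moyal_Cx_left (a : MvPolynomial (Fin n) k) (c : B k n) (m : Fin n →₀ ℕ) :
    MvPowerSeries.coeff m (moyal (Cx a) c) = ∑ᶠ α : Fin n →₀ ℕ,
      ((α.prod fun _ j => (j.factorial : k))⁻¹) •
        (xD α a * MvPowerSeries.coeff m (pD α c)) := by
  rw [coeff_moyal]
  rw [Finset.sum_eq_single_of_mem (0, m) (Finset.HasAntidiagonal.mem_antidiagonal.mpr (zero_add m))]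
  · rw [show MvPowerSeries.coeff (0, m).1 (Cx a) = a from by rw [coeff_Cx, if_pos rfl]]
  · intro q hq hne
    have hq1 : q.1 ≠ 0 := by
      intro h
      exact hne (Prod.ext h (by rw [← Finset.HasAntidiagonal.mem_antidiagonal.mp hq, h, zero_add]))
    refine finsum_eq_zero_of_forall_eq_zero fun α => ?_
    rw [coeff_Cx, if_neg hq1, xD_zero_poly, zero_mul, smul_zero]

lemma coeff_moyal_CxT (a : MvPolynomial (Fin n) k) (Q : Fin n → MvPolynomial (Fin n) k)
    (c : B k n)
    (hc : ∀ m, MvPowerSeries.coeff m c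
      = ∑ j, if m = Finsupp.single j (1:ℕ) then Q j else 0) (m : Fin n →₀ ℕ) :
    MvPowerSeries.coeff m (moyal (Cx a) c) =
      if m = 0 then ∑ j, MvPolynomial.pderiv j a * Q j
      else a * ∑ j, if m = Finsupp.single j (1:ℕ) then Q j else 0 := by
  rw [coeff_moyal_Cx_left]
  by_cases hm : m = 0
  · subst hm
    rw [if_pos rfl]
    rw [finsum_eq_finset_sum_of_support_subset _
      (s := Finset.image (fun j => Finsupp.single j (1:ℕ)) Finset.univ) ?hsupp]
    case hsupp =>
      intro α hα
      simp only [Function.mem_support, ne_eq] at hα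
      by_contra hmem
      apply hα
      have hT : MvPowerSeries.coeff ((0 : Fin n →₀ ℕ) + α) c = 0 := by
        rw [hc]
        refine sumIfZero _ fun j h => ?_
        apply hmem
        simp only [Finset.coe_image, Finset.coe_univ, Set.image_univ, Set.mem_range]
        exact ⟨j, by rw [← h, zero_add]⟩
      rw [coeff_pD, hT, smul_zero, mul_zero, smul_zero]
    rw [Finset.sum_image (fun i _ j _ h => (Finsupp.single_left_inj one_ne_zero).mp h)]
    refine Finset.sum_congr rfl fun j _ => ?_
    rw [factE, one_smul, xD_single, coeff_pD]
    rw [show ((0 : Fin n →₀ ℕ) + Finsupp.single j (1:ℕ)) = Finsupp.single j 1 from zero_add _]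
    rw [hc, sumIf, prod_desc_single, Nat.cast_one, one_smul]
  · rw [if_neg hm]
    rw [finsum_eq_single _ 0 ?hz]
    case hz =>
      intro α hα
      have hT : MvPowerSeries.coeff (m + α) c = 0 := by
        rw [hc]
        exact sumIfZero _ fun j => add_ne_single hm hα j
      rw [coeff_pD, hT, smul_zero, mul_zero, smul_zero]
    rw [fact0, one_smul, xD_zero, coeff_pD, descD0, one_smul, add_zero, hc]

lemma coeff_hInt (l : ℕ) (j : Fin n) (b : B k n) (m : Fin n →₀ ℕ) :
    MvPowerSeries.coeff m (hInt l j b) = if m j = 0 then 0 else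
      (((l + (m.sum fun _ c => c) - 1 : ℕ) : k)⁻¹) •
        MvPowerSeries.coeff (m - Finsupp.single j 1) b := rfl

lemma coeff_hInt_Cx (l : ℕ) (j : Fin n) (f : MvPolynomial (Fin n) k) (m : Fin n →₀ ℕ) :
    MvPowerSeries.coeff m (hInt l j (Cx f))
      = if m = Finsupp.single j (1:ℕ) then ((l : k))⁻¹ • f else 0 := by
  rw [coeff_hInt]
  by_cases hm : m = Finsupp.single j 1
  · subst hm
    rw [if_neg (by simp), if_pos rfl, deg_single, coeff_Cx, if_pos (by simp),
      Nat.add_sub_cancel]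
  · rw [if_neg hm]
    by_cases hj : m j = 0
    · rw [if_pos hj]
    · rw [if_neg hj, coeff_Cx, if_neg, smul_zero]
      intro h
      apply hm
      ext i
      have hle := DFunLike.congr_fun h i
      simp only [Finsupp.tsub_apply, Finsupp.coe_zero, Pi.zero_apply] at hle
      by_cases hij : i = j
      · subst hij
        simp only [Finsupp.single_eq_same] at hle ⊢
        omega
      · rw [Finsupp.single_eq_of_ne' (Ne.symm hij)]
        rw [Finsupp.single_eq_of_ne' (Ne.symm hij)] at hle
        omega

lemma theta (π : Fin n → Fin n → k) (w : Fin 1 → Fin n) (m : Fin n →₀ ℕ) :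
    MvPowerSeries.coeff m (hOp 1 (lam π) w)
      = ∑ j, if m = Finsupp.single j (1:ℕ)
          then MvPolynomial.C ((2:k)⁻¹ * π (w 0) j) else 0 := by
  unfold hOp
  rw [map_sum]
  refine Finset.sum_congr rfl fun j _ => ?_
  have hlam : lam π (Fin.cons j w) = Cx (MvPolynomial.C (π (w 0) j)) := rfl
  rw [hlam, coeff_hInt_Cx]
  by_cases hm : m = Finsupp.single j 1
  · rw [if_pos hm, if_pos hm, MvPolynomial.smul_eq_C_mul, ← MvPolynomial.C_mul]
    norm_num
  · rw [if_neg hm, if_neg hm]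

lemma psi (π : Fin n → Fin n → k) (a : MvPolynomial (Fin n) k) (v : Fin 1 → Fin n) :
    δ0F (hOp 1 (lam π)) a v
      = Cx (∑ i, ((2:k)⁻¹ * π (v 0) i) • MvPolynomial.pderiv i a) := by
  apply MvPowerSeries.ext; intro m
  unfold δ0F
  rw [map_sub,
    coeff_moyal_CxT a (fun j => MvPolynomial.C ((2:k)⁻¹ * π (v 0) j)) _ (theta π v) m,
    coeff_moyal_constRight, theta, coeff_Cx]
  by_cases hm : m = 0
  · subst hm
    rw [if_pos rfl, if_pos rfl, sumIfZero _ (fun j h => single_ne_zero' j h.symm), zero_mul,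
      sub_zero]
    refine Finset.sum_congr rfl fun i _ => ?_
    rw [MvPolynomial.smul_eq_C_mul, mul_comm]
  · rw [if_neg hm, if_neg hm, mul_comm, sub_self]

lemma hdh (π : Fin n → Fin n → k) (a : MvPolynomial (Fin n) k) (m : Fin n →₀ ℕ) :
    MvPowerSeries.coeff m (hδhlam π a)
      = ∑ j, if m = Finsupp.single j (1:ℕ)
          then (∑ i, ((2:k)⁻¹ * π j i) • MvPolynomial.pderiv i a) else 0 := by
  rw [show hδhlam π a = ∑ j : Fin n, hInt (0 + 1) j
      (δ0F (hOp 1 (lam π)) a (Fin.cons j (fun i => i.elim0))) from rfl, map_sum]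
  refine Finset.sum_congr rfl fun j _ => ?_
  rw [psi π a (Fin.cons j (fun i => i.elim0)), coeff_hInt_Cx]
  by_cases hm : m = Finsupp.single j 1
  · rw [if_pos hm, if_pos hm]
    simp [Fin.cons_zero]
  · rw [if_neg hm, if_neg hm]

lemma coeff_moyal_CxC (c : k) (b : B k n) (m : Fin n →₀ ℕ) :
    MvPowerSeries.coeff m (moyal (Cx (MvPolynomial.C c)) b)
      = MvPolynomial.C c * MvPowerSeries.coeff m b := by
  rw [coeff_moyal_Cx_left, finsum_eq_single _ 0 ?h]
  · rw [fact0, one_smul, xD_zero, pD_zero]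
  · intro α hα
    rw [xD_C_ne hα, zero_mul, smul_zero]


/-- The constant bivector is central, and `μ₁ = δhδhlam` is the constant Poisson
bracket `μ₁(a,b) = ½ π^{ij} ∂ᵢa ∂ⱼb`. -/
theorem constant_bivector_quantization (π : Fin n → Fin n → k)
    (hπ : ∀ i j, π j i = - π i j) :
    (∀ b : B k n, ∀ v, moyal b (lam π v) = moyal (lam π v) b) ∧
    (∀ a b : MvPolynomial (Fin n) k,
      MvPowerSeries.coeff 0 (μ1 π a b)
        = (2 : k)⁻¹ • ∑ i, ∑ j, π i j •
            (MvPolynomial.pderiv i a * MvPolynomial.pderiv j b)) := by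
  constructor
  · intro b v
    apply MvPowerSeries.ext; intro m
    rw [show lam π v = Cx (MvPolynomial.C (π (v 1) (v 0))) from rfl, coeff_moyal_constRight,
      coeff_moyal_CxC, mul_comm]
  · intro a b
    have hz : ∀ j : Fin n, (0 : Fin n →₀ ℕ) ≠ Finsupp.single j 1 :=
      fun j h => single_ne_zero' j h.symm
    unfold μ1
    rw [map_add, map_sub,
      coeff_moyal_CxT a (fun j => ∑ i, ((2:k)⁻¹ * π j i) • MvPolynomial.pderiv i b)
        (hδhlam π b) (hdh π b) 0,
      if_pos rfl, hdh, sumIfZero _ hz, coeff_moyal_constRight, hdh, sumIfZero _ hz, zero_mul,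
      sub_zero, add_zero, Finset.smul_sum]
    refine Finset.sum_congr rfl fun j _ => ?_
    rw [Finset.mul_sum, Finset.smul_sum]
    refine Finset.sum_congr rfl fun i _ => ?_
    rw [mul_smul_comm, smul_smul]
end
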